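/- arXiv:2310.03643 — 6 statements merged into one kernel-verified Lean document; each statement's English description precedes it below -/
import Mathlib

section
/- If λ₁, λ₂ : X → ℝ ∪ {−∞} are upper semicontinuous, not identically −∞, and sup_{x∈X}(λ₁(x) + h(x)) = sup_{x∈X}(λ₂(x) + h(x)) for every continuous h : X → ℝ, then λ₁ = λ₂. -/
open Set

/-- A u.s.c. function on a compact space with no `⊤` values is bounded above by a real. -/
lemma usc_bddAbove {X : Type*} [MetricSpace X] [CompactSpace X]
    (l : X → EReal) (husc : UpperSemicontinuous l) (htop : ∀ x, l x ≠ ⊤) :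
    ∃ B : ℝ, ∀ x, l x ≤ (B : EReal) := by
  have hcover : (univ : Set X) ⊆ ⋃ n : ℕ, l ⁻¹' Iio ((n : ℝ) : EReal) := by
    intro x _
    rcases eq_or_ne (l x) ⊥ with hbx | hbx
    · exact mem_iUnion.2 ⟨0, by simp [hbx]⟩
    · obtain ⟨n, hn⟩ := exists_nat_gt (l x).toReal
      refine mem_iUnion.2 ⟨n, ?_⟩
      have : l x = ((l x).toReal : EReal) := (EReal.coe_toReal (htop x) hbx).symm
      simp only [Set.mem_preimage, mem_Iio]
      rw [this]
      exact EReal.coe_lt_coe_iff.2 hn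
  obtain ⟨s, hs⟩ := isCompact_univ.elim_finite_subcover
    (fun n : ℕ => l ⁻¹' Iio ((n : ℝ) : EReal))
    (fun n => husc.isOpen_preimage _) hcover
  rcases s.eq_empty_or_nonempty with rfl | hne
  · refine ⟨0, fun x => ?_⟩
    have := hs (mem_univ x); simp at this
  · obtain ⟨N, hN⟩ := s.exists_le
    refine ⟨N, fun x => ?_⟩
    obtain ⟨n, hn, hx⟩ := mem_iUnion₂.1 (hs (mem_univ x))
    have : ((n : ℝ) : EReal) ≤ ((N : ℝ) : EReal) :=
      EReal.coe_le_coe_iff.2 (by exact_mod_cast hN n hn)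
    exact le_trans (le_of_lt hx) this

/-- Key one-sided lemma. -/
lemma usc_density_le {X : Type*} [MetricSpace X] [CompactSpace X]
    (l₁ l₂ : X → EReal)
    (husc₂ : UpperSemicontinuous l₂)
    (htop₁ : ∀ x, l₁ x ≠ ⊤) (htop₂ : ∀ x, l₂ x ≠ ⊤)
    (hle : ∀ h : C(X, ℝ),
      (⨆ x, l₁ x + (h x : EReal)) ≤ ⨆ x, l₂ x + (h x : EReal)) :
    l₁ ≤ l₂ := by
  intro x₀
  by_contra hlt
  push_neg at hlt
  -- pick a real c strictly between l₂ x₀ and l₁ x₀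
  obtain ⟨c, hc₂, hc₁⟩ := EReal.exists_between_coe_real hlt
  -- l₁ x₀ is a real a
  have hbot₁ : l₁ x₀ ≠ ⊥ := by
    intro h; rw [h] at hc₁; exact (not_lt_bot hc₁)
  set a : ℝ := (l₁ x₀).toReal with ha
  have hax : l₁ x₀ = (a : EReal) := (EReal.coe_toReal (htop₁ x₀) hbot₁).symm
  have hca : c < a := by
    rw [hax] at hc₁; exact EReal.coe_lt_coe_iff.1 hc₁
  -- bound on l₂
  obtain ⟨B, hB⟩ := usc_bddAbove l₂ husc₂ htop₂
  -- choose M large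
  set M : ℝ := max 0 (B - a + 1) with hM
  have hM0 : 0 ≤ M := le_max_left _ _
  have hBaM : B < a + M := by
    have : B - a + 1 ≤ M := le_max_right _ _
    linarith
  -- open set where l₂ < c
  set U : Set X := l₂ ⁻¹' Iio ((c : EReal)) with hU
  have hUopen : IsOpen U := husc₂.isOpen_preimage _
  have hx₀U : x₀ ∈ U := hc₂
  -- Urysohn bump
  obtain ⟨f, hf0, hf1, hf01⟩ := exists_continuous_zero_one_of_isClosed
    (hUopen.isClosed_compl) (isClosed_singleton (x := x₀))
    (by rw [Set.disjoint_left]; intro x hx h; exact hx (h ▸ hx₀U))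
  set g : C(X, ℝ) := M • f with hg
  have hgx₀ : g x₀ = M := by
    simp [hg, hf1 (mem_singleton x₀)]
  have hgle : ∀ x, g x ≤ M := fun x => by
    have := (hf01 x).2
    simpa [hg] using mul_le_of_le_one_right hM0 this
  have hg0 : ∀ x ∉ U, g x = 0 := fun x hx => by
    simp [hg, hf0 hx]
  -- contradiction
  have hsup₁ : ((a + M : ℝ) : EReal) ≤ ⨆ x, l₁ x + (g x : EReal) := by
    refine le_trans ?_ (le_iSup _ x₀)
    rw [hax, hgx₀, ← EReal.coe_add]
  have hsup₂ : (⨆ x, l₂ x + (g x : EReal)) < ((a + M : ℝ) : EReal) := by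
    have hlt' : ((max (c + M) B : ℝ) : EReal) < ((a + M : ℝ) : EReal) := by
      apply EReal.coe_lt_coe_iff.2
      exact max_lt (by linarith) hBaM
    refine lt_of_le_of_lt (iSup_le fun x => ?_) hlt'
    by_cases hx : x ∈ U
    · have h2 : l₂ x ≤ (c : EReal) := le_of_lt hx
      have h3 : (g x : EReal) ≤ (M : EReal) := EReal.coe_le_coe_iff.2 (hgle x)
      calc l₂ x + (g x : EReal) ≤ (c : EReal) + (M : EReal) := add_le_add h2 h3
        _ ≤ ((max (c + M) B : ℝ) : EReal) := by
            rw [← EReal.coe_add]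
            exact EReal.coe_le_coe_iff.2 (le_max_left _ _)
    · have h2 : l₂ x + (g x : EReal) = l₂ x := by rw [hg0 x hx]; simp
      rw [h2]
      exact le_trans (hB x) (EReal.coe_le_coe_iff.2 (le_max_right _ _))
  exact absurd (hle g) (not_le.2 (lt_of_lt_of_le hsup₂ hsup₁))

/-- Two u.s.c. densities (not identically −∞) defining the same idempotent measure
coincide. -/
theorem usc_density_unique {X : Type*} [MetricSpace X] [CompactSpace X]
    (l₁ l₂ : X → EReal)
    (husc₁ : UpperSemicontinuous l₁) (husc₂ : UpperSemicontinuous l₂)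
    (htop₁ : ∀ x, l₁ x ≠ ⊤) (htop₂ : ∀ x, l₂ x ≠ ⊤)
    (hbot₁ : ∃ x, l₁ x ≠ ⊥) (hbot₂ : ∃ x, l₂ x ≠ ⊥)
    (heq : ∀ h : C(X, ℝ),
      (⨆ x, l₁ x + (h x : EReal)) = ⨆ x, l₂ x + (h x : EReal)) :
    l₁ = l₂ := by
  have h12 := usc_density_le l₁ l₂ husc₂ htop₁ htop₂ fun h => (heq h).le
  have h21 := usc_density_le l₂ l₁ husc₁ htop₂ htop₁ fun h => (heq h).ge
  exact le_antisymm h12 h21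
end

section
/- If λ₁, λ₂ : X → ℝ ∪ {−∞} are bounded above and satisfy sup_{x∈X}(λ₁(x)+h(x)) = sup_{x∈X}(λ₂(x)+h(x)) for every continuous h : X → ℝ, then a continuous φ : X → ℝ satisfies φ ≥ λ₁ pointwise if and only if φ ≥ λ₂ pointwise; consequently the upper semicontinuous envelopes of λ₁ and λ₂ coincide. -/
/-- Two bounded-above densities inducing the same functional have the same
continuous majorants, hence the same u.s.c. envelope. -/
theorem same_functional_same_envelope {X : Type*} [MetricSpace X] [CompactSpace X]
    (l₁ l₂ : X → EReal)
    (hbdd₁ : ∃ K : ℝ, ∀ x, l₁ x ≤ (K : EReal)) (hbdd₂ : ∃ K : ℝ, ∀ x, l₂ x ≤ (K : EReal))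
    (heq : ∀ h : C(X, ℝ),
      (⨆ x, l₁ x + (h x : EReal)) = ⨆ x, l₂ x + (h x : EReal)) :
    (∀ φ : C(X, ℝ), (∀ x, l₁ x ≤ (φ x : EReal)) ↔ (∀ x, l₂ x ≤ (φ x : EReal))) ∧
    (fun x => ⨅ (φ : C(X, ℝ)) (_ : ∀ y, l₁ y ≤ (φ y : EReal)), ((φ x : ℝ) : EReal)) =
      (fun x => ⨅ (φ : C(X, ℝ)) (_ : ∀ y, l₂ y ≤ (φ y : EReal)), ((φ x : ℝ) : EReal)) := by
  have main : ∀ (l : X → EReal) (φ : C(X, ℝ)),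
      (∀ x, l x ≤ (φ x : EReal)) ↔ (⨆ x, l x + (((-φ) x : ℝ) : EReal)) ≤ 0 := by
    intro l φ
    rw [iSup_le_iff]
    apply forall_congr'
    intro x
    have hx : (((-φ) x : ℝ) : EReal) = ((-(φ x) : ℝ) : EReal) := by
      simp
    rw [hx]
    induction l x using EReal.rec with
    | bot => simp
    | coe a =>
        rw [show ((a : EReal) + ((-(φ x) : ℝ) : EReal)) = (((a + -(φ x)) : ℝ) : EReal) by
          norm_cast]
        constructor
        · intro h
          have : (a : ℝ) ≤ φ x := by exact_mod_cast h
          exact_mod_cast (by linarith : (a + -(φ x) : ℝ) ≤ 0)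
        · intro h
          have : (a + -(φ x) : ℝ) ≤ 0 := by exact_mod_cast h
          exact_mod_cast (by linarith : (a : ℝ) ≤ φ x)
    | top =>
        constructor
        · intro h; exact absurd h (by simp [EReal.coe_lt_top, lt_iff_not_ge] at *)
        · intro h
          exfalso
          have : ((⊤ : EReal) + ((-(φ x) : ℝ) : EReal)) = ⊤ := by
            exact EReal.top_add_coe _
          rw [this] at h
          exact absurd h (by simp)
  have key : ∀ φ : C(X, ℝ), (∀ x, l₁ x ≤ (φ x : EReal)) ↔ (∀ x, l₂ x ≤ (φ x : EReal)) := by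
    intro φ
    rw [main l₁ φ, main l₂ φ, heq (-φ)]
  refine ⟨key, ?_⟩
  funext x
  exact iInf_congr fun φ => by rw [propext (key φ)]
end

section
/- Let (X, (φ_j)_{j∈J}, (q_j)_{j∈J}) be a max-plus IFS: J, X compact metric spaces, d_X(φ_{j₁}(x₁), φ_{j₂}(x₂)) ≤ γ(d_J(j₁,j₂)+d_X(x₁,x₂)) with 0<γ<1, q : J×X → ℝ continuous with |q_j(x₁)−q_j(x₂)| ≤ C·d_X(x₁,x₂) and sup_{j∈J} q_j(x) = 0 for every x. Define S_ε(x,y) = sup over n and words ω ∈ J^n with d_X(x, φ_ω(y)) < ε of Sum(ω,y), and the Mañé potential S(x,y) = lim_{ε→0} S_ε(x,y). Then the Aubry set Ω = { x ∈ X : S(x,x) = 0 } is nonempty. -/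
open Filter Topology

/-- Apply the maps of a word: `applyWord φ [j₁,…,jₙ] x = φ_{j₁}(⋯(φ_{jₙ}(x)))`. -/
def applyWord {J X : Type*} (φ : J → X → X) : List J → X → X
  | [], x => x
  | j :: w, x => φ j (applyWord φ w x)

/-- Birkhoff-like sum of weights along a word:
`Sum((j₁,…,jₙ),x) = q_{j₁}(φ_{j₂}∘⋯∘φ_{jₙ}(x)) + ⋯ + q_{jₙ}(x)`. -/
def sumWord {J X : Type*} (φ : J → X → X) (q : J → X → ℝ) : List J → X → ℝ
  | [], _ => 0
  | j :: w, x => q j (applyWord φ w x) + sumWord φ q w x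

/-- `S_ε(x,y)`: the sup of `Sum(ω,y)` over nonempty words ω with `d(x,φ_ω(y)) < ε`. -/
noncomputable def Seps {J X : Type*} [MetricSpace X] (φ : J → X → X) (q : J → X → ℝ)
    (ε : ℝ) (x y : X) : EReal :=
  ⨆ (ω : List J) (_ : ω ≠ [] ∧ dist x (applyWord φ ω y) < ε),
    ((sumWord φ q ω y : ℝ) : EReal)

/-- The Mañé potential `S(x,y) = lim_{ε→0} S_ε(x,y) = inf_{ε>0} S_ε(x,y)`. -/
noncomputable def manePot {J X : Type*} [MetricSpace X] (φ : J → X → X) (q : J → X → ℝ)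
    (x y : X) : EReal :=
  ⨅ (ε : ℝ) (_ : 0 < ε), Seps φ q ε x y

/-- The Aubry set `Ω = {x : S(x,x) = 0}` of a max-plus IFS is nonempty. -/
theorem aubry_set_nonempty {J X : Type*} [MetricSpace J] [MetricSpace X]
    [CompactSpace J] [CompactSpace X] [Nonempty J] [Nonempty X]
    {γ C : ℝ} (hγ0 : 0 < γ) (hγ1 : γ < 1)
    (φ : J → X → X)
    (hφ : ∀ j₁ j₂ x₁ x₂, dist (φ j₁ x₁) (φ j₂ x₂) ≤ γ * (dist j₁ j₂ + dist x₁ x₂))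
    (q : J → X → ℝ) (hC : 0 < C)
    (hq : ∀ j x₁ x₂, |q j x₁ - q j x₂| ≤ C * dist x₁ x₂)
    (hqc : Continuous fun p : J × X => q p.1 p.2)
    (hqn : ∀ x, (⨆ j : J, q j x) = 0) :
    ∃ x : X, manePot φ q x x = 0 := by
  -- the sup 0 is attained: for each x there is j with q j x = 0, and all q j x ≤ 0
  have hmax : ∀ z : X, ∃ j0 : J, q j0 z = 0 ∧ ∀ j, q j z ≤ q j0 z := by
    intro z
    have hcont : Continuous fun j : J => q j z :=
      hqc.comp (continuous_id.prodMk continuous_const)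
    obtain ⟨j0, -, hj0⟩ := isCompact_univ.exists_isMaxOn Set.univ_nonempty
      hcont.continuousOn
    have hmx : ∀ j, q j z ≤ q j0 z := fun j => hj0 (Set.mem_univ j)
    have hbdd : BddAbove (Set.range fun j : J => q j z) := by
      refine ⟨q j0 z, ?_⟩
      rintro _ ⟨j, rfl⟩; exact hmx j
    have h1 : q j0 z ≤ 0 := (hqn z) ▸ le_ciSup hbdd j0
    have h2 : (0:ℝ) ≤ q j0 z := (hqn z) ▸ ciSup_le hmx
    exact ⟨j0, le_antisymm h1 h2, hmx⟩
  have hqle : ∀ (j : J) (z : X), q j z ≤ 0 := by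
    intro j z
    obtain ⟨j0, h0, hmx⟩ := hmax z
    exact (hmx j).trans h0.le
  -- all Birkhoff sums are ≤ 0
  have hsumle : ∀ (w : List J) (z : X), sumWord φ q w z ≤ 0 := by
    intro w z
    induction w with
    | nil => simp [sumWord]
    | cons j w ih => exact add_nonpos (hqle _ _) ih
  -- Seps ≤ 0 and manePot ≤ 0 everywhere
  have hSeps_le : ∀ (ε : ℝ) (a b : X), Seps φ q ε a b ≤ 0 := by
    intro ε a b
    refine iSup_le fun ω => iSup_le fun _ => ?_
    exact_mod_cast hsumle ω b
  have hmane_le : ∀ a : X, manePot φ q a a ≤ 0 := fun a =>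
    le_trans (iInf₂_le 1 one_pos) (hSeps_le 1 a a)
  -- contraction of words
  have happly : ∀ (w : List J) (a b : X),
      dist (applyWord φ w a) (applyWord φ w b) ≤ γ ^ w.length * dist a b := by
    intro w a b
    induction w with
    | nil => simp [applyWord]
    | cons j w ih =>
      have h := hφ j j (applyWord φ w a) (applyWord φ w b)
      simp only [dist_self, zero_add] at h
      calc dist (applyWord φ (j :: w) a) (applyWord φ (j :: w) b)
          ≤ γ * dist (applyWord φ w a) (applyWord φ w b) := h
        _ ≤ γ * (γ ^ w.length * dist a b) := by
            exact mul_le_mul_of_nonneg_left ih hγ0.le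
        _ = γ ^ (j :: w).length * dist a b := by ring_nf; rw [List.length_cons]; ring
  have happly' : ∀ (w : List J) (a b : X),
      dist (applyWord φ w a) (applyWord φ w b) ≤ dist a b := by
    intro w a b
    refine (happly w a b).trans ?_
    have : γ ^ w.length ≤ 1 := pow_le_one₀ hγ0.le hγ1.le
    nlinarith [dist_nonneg (x := a) (y := b)]
  -- Lipschitz estimate for sums
  set D : ℝ := C / (1 - γ) with hD
  have hγ' : (0:ℝ) < 1 - γ := by linarith
  have hDC : D * (1 - γ) = C := div_mul_cancel₀ C hγ'.ne'
  have hDpos : 0 < D := div_pos hC hγ'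
  have hsumlip : ∀ (w : List J) (a b : X),
      |sumWord φ q w a - sumWord φ q w b| ≤ D * (1 - γ ^ w.length) * dist a b := by
    intro w a b
    induction w with
    | nil => simp [sumWord]
    | cons j w ih =>
      have h1 : |q j (applyWord φ w a) - q j (applyWord φ w b)|
          ≤ C * (γ ^ w.length * dist a b) :=
        le_trans (hq j _ _) (mul_le_mul_of_nonneg_left (happly w a b) hC.le)
      have h2 : |sumWord φ q (j :: w) a - sumWord φ q (j :: w) b|
          ≤ |q j (applyWord φ w a) - q j (applyWord φ w b)|
            + |sumWord φ q w a - sumWord φ q w b| := by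
        simp only [sumWord]
        exact le_trans (le_of_eq (by ring_nf)) (abs_add_le _ _)
      refine h2.trans ?_
      have h3 : C * (γ ^ w.length * dist a b) + D * (1 - γ ^ w.length) * dist a b
          = D * (1 - γ ^ (j :: w).length) * dist a b := by
        rw [List.length_cons, pow_succ, ← hDC]
        ring
      linarith [ih, h1]
  have hsumlip' : ∀ (w : List J) (a b : X),
      |sumWord φ q w a - sumWord φ q w b| ≤ D * dist a b := by
    intro w a b
    refine (hsumlip w a b).trans ?_
    have h1 : (0:ℝ) ≤ γ ^ w.length := pow_nonneg hγ0.le _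
    nlinarith [dist_nonneg (x := a) (y := b),
      mul_nonneg (mul_nonneg hDpos.le h1) (dist_nonneg (x := a) (y := b))]
  -- the zero-cost orbit
  obtain ⟨g, hg⟩ := Classical.axiomOfChoice hmax
  let y : ℕ → X := fun n => Nat.rec (Classical.arbitrary X) (fun _ p => φ (g p) p) n
  have hy : ∀ n, y (n + 1) = φ (g (y n)) (y n) := fun n => rfl
  have horb : ∀ n k, ∃ w : List J, w.length = k ∧
      applyWord φ w (y n) = y (n + k) ∧ sumWord φ q w (y n) = 0 := by
    intro n k
    induction k with
    | zero => exact ⟨[], rfl, rfl, rfl⟩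
    | succ k ih =>
      obtain ⟨w, hlen, happ, hsum⟩ := ih
      refine ⟨g (y (n + k)) :: w, by simp [hlen], ?_, ?_⟩
      · show φ (g (y (n+k))) (applyWord φ w (y n)) = y (n + (k+1))
        rw [happ, ← Nat.add_assoc, hy]
      · show q (g (y (n+k))) (applyWord φ w (y n)) + sumWord φ q w (y n) = 0
        rw [happ, hsum, (hg (y (n+k))).1, add_zero]
  -- accumulation point
  obtain ⟨x, -, ψ, hψ, hconv⟩ :=
    isCompact_univ.tendsto_subseq (x := y) (fun n => Set.mem_univ (y n))
  refine ⟨x, le_antisymm (hmane_le x) ?_⟩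
  -- 0 ≤ manePot φ q x x
  refine le_iInf₂ fun ε hε => ?_
  by_contra hlt
  push_neg at hlt
  obtain ⟨r, hr1, hr2⟩ := EReal.lt_iff_exists_real_btwn.mp hlt
  have hrneg : r < 0 := by exact_mod_cast hr2
  set η : ℝ := min (ε / 2) (-r / D) with hη
  have hηpos : 0 < η := lt_min (by linarith) (div_pos (by linarith) hDpos)
  obtain ⟨N, hN⟩ := (Metric.tendsto_atTop.mp hconv) η hηpos
  have hd1 : dist (y (ψ N)) x < η := hN N le_rfl
  have hd2 : dist (y (ψ (N + 1))) x < η := hN (N + 1) (Nat.le_succ N)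
  have hlt' : ψ N < ψ (N + 1) := hψ (Nat.lt_succ_self N)
  set k : ℕ := ψ (N + 1) - ψ N with hk
  have hkpos : 0 < k := Nat.sub_pos_of_lt hlt'
  obtain ⟨w, hlen, happ, hsum⟩ := horb (ψ N) k
  have hnk : ψ N + k = ψ (N + 1) := by omega
  rw [hnk] at happ
  have hwne : w ≠ [] := by
    intro h; rw [h] at hlen; simp at hlen; omega
  -- distance estimate
  have hdist : dist x (applyWord φ w x) < ε := by
    have h1 : dist (applyWord φ w (y (ψ N))) (applyWord φ w x) ≤ dist (y (ψ N)) x :=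
      happly' w _ _
    calc dist x (applyWord φ w x)
        ≤ dist x (y (ψ (N+1))) + dist (y (ψ (N+1))) (applyWord φ w x) :=
          dist_triangle _ _ _
      _ = dist x (y (ψ (N+1))) + dist (applyWord φ w (y (ψ N))) (applyWord φ w x) := by
          rw [happ]
      _ ≤ dist x (y (ψ (N+1))) + dist (y (ψ N)) x := by linarith
      _ < η + η := by rw [dist_comm x]; linarith
      _ ≤ ε := by
          have := min_le_left (ε / 2) (-r / D)
          rw [hη]; linarith [min_le_left (ε / 2) (-r / D)]
  -- sum estimate
  have hsumx : r ≤ sumWord φ q w x := by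
    have h1 : |sumWord φ q w x - sumWord φ q w (y (ψ N))| ≤ D * dist x (y (ψ N)) :=
      hsumlip' w _ _
    rw [hsum, sub_zero] at h1
    have h2 : dist x (y (ψ N)) < η := by rw [dist_comm]; exact hd1
    have h3 : D * dist x (y (ψ N)) ≤ D * η :=
      mul_le_mul_of_nonneg_left h2.le hDpos.le
    have h4 : D * η ≤ -r := by
      have h5 : η ≤ -r / D := min_le_right _ _
      calc D * η ≤ D * (-r / D) := mul_le_mul_of_nonneg_left h5 hDpos.le
        _ = -r := by field_simp
    have := abs_le.mp h1
    linarith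
  -- contradiction: r ≤ Seps
  have hle : ((r : ℝ) : EReal) ≤ Seps φ q ε x x := by
    refine le_trans ?_ (le_iSup₂ (f := fun (ω : List J)
      (_ : ω ≠ [] ∧ dist x (applyWord φ ω x) < ε) => ((sumWord φ q ω x : ℝ) : EReal))
      w ⟨hwne, hdist⟩)
    exact_mod_cast hsumx
  exact absurd (hle.trans_lt hr1) (lt_irrefl _)
end

section
/- With the Mañé potential S of a max-plus IFS as above, for all x, y, z ∈ X the triangle-type inequality S(x,y) + S(y,z) ≤ S(x,z) holds (with the convention (−∞) + a = −∞). -/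
open Filter Topology

lemma applyWord_append {J X : Type*} (φ : J → X → X) (ω τ : List J) (x : X) :
    applyWord φ (ω ++ τ) x = applyWord φ ω (applyWord φ τ x) := by
  induction ω with
  | nil => rfl
  | cons j w ih => simp [applyWord, ih]

lemma sumWord_append {J X : Type*} (φ : J → X → X) (q : J → X → ℝ) (ω τ : List J) (x : X) :
    sumWord φ q (ω ++ τ) x = sumWord φ q ω (applyWord φ τ x) + sumWord φ q τ x := by
  induction ω with
  | nil => simp [sumWord]
  | cons j w ih => simp [sumWord, ih, applyWord_append]; ring

/-- Triangle-type inequality for the Mañé potential: S(x,y) + S(y,z) ≤ S(x,z). -/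
theorem manePot_triangle {J X : Type*} [MetricSpace J] [MetricSpace X]
    [CompactSpace J] [CompactSpace X] [Nonempty J] [Nonempty X]
    {γ C : ℝ} (hγ0 : 0 < γ) (hγ1 : γ < 1)
    (φ : J → X → X)
    (hφ : ∀ j₁ j₂ x₁ x₂, dist (φ j₁ x₁) (φ j₂ x₂) ≤ γ * (dist j₁ j₂ + dist x₁ x₂))
    (q : J → X → ℝ) (hC : 0 < C)
    (hq : ∀ j x₁ x₂, |q j x₁ - q j x₂| ≤ C * dist x₁ x₂)
    (hqc : Continuous fun p : J × X => q p.1 p.2)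
    (hqn : ∀ x, (⨆ j : J, q j x) = 0) :
    ∀ x y z : X, manePot φ q x y + manePot φ q y z ≤ manePot φ q x z := by
  have h1γ : (0:ℝ) < 1 - γ := by linarith
  set K : ℝ := C / (1 - γ) with hKdef
  have hK : 0 < K := div_pos hC h1γ
  -- contraction of applyWord
  have hcontr : ∀ (ω : List J) (a b : X),
      dist (applyWord φ ω a) (applyWord φ ω b) ≤ γ ^ ω.length * dist a b := by
    intro ω
    induction ω with
    | nil => intro a b; simp [applyWord]
    | cons j w ih =>
      intro a b
      calc dist (applyWord φ (j :: w) a) (applyWord φ (j :: w) b)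
          ≤ γ * (dist j j + dist (applyWord φ w a) (applyWord φ w b)) := hφ _ _ _ _
        _ = γ * dist (applyWord φ w a) (applyWord φ w b) := by simp
        _ ≤ γ * (γ ^ w.length * dist a b) := by
            exact mul_le_mul_of_nonneg_left (ih a b) hγ0.le
        _ = γ ^ (j :: w).length * dist a b := by
            simp [pow_succ]; ring
  have hgs : ∀ n : ℕ, (∑ i ∈ Finset.range n, γ ^ i) ≤ 1 / (1 - γ) := by
    intro n
    have hm := geom_sum_mul γ n
    rw [le_div_iff₀ h1γ]
    nlinarith [pow_nonneg hγ0.le n]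
  -- Lipschitz bound for sumWord
  have hsum : ∀ (ω : List J) (a b : X),
      |sumWord φ q ω a - sumWord φ q ω b| ≤ K * dist a b := by
    have main : ∀ (ω : List J) (a b : X),
        |sumWord φ q ω a - sumWord φ q ω b|
          ≤ C * (∑ i ∈ Finset.range ω.length, γ ^ i) * dist a b := by
      intro ω
      induction ω with
      | nil => intro a b; simp [sumWord]
      | cons j w ih =>
        intro a b
        have h1 : |q j (applyWord φ w a) - q j (applyWord φ w b)|
            ≤ C * (γ ^ w.length * dist a b) := by
          calc |q j (applyWord φ w a) - q j (applyWord φ w b)|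
              ≤ C * dist (applyWord φ w a) (applyWord φ w b) := hq _ _ _
            _ ≤ C * (γ ^ w.length * dist a b) :=
                mul_le_mul_of_nonneg_left (hcontr w a b) hC.le
        calc |sumWord φ q (j :: w) a - sumWord φ q (j :: w) b|
            ≤ |q j (applyWord φ w a) - q j (applyWord φ w b)|
              + |sumWord φ q w a - sumWord φ q w b| := by
              simp only [sumWord]
              have h0 : q j (applyWord φ w a) + sumWord φ q w a
                  - (q j (applyWord φ w b) + sumWord φ q w b)
                  = (q j (applyWord φ w a) - q j (applyWord φ w b))
                    + (sumWord φ q w a - sumWord φ q w b) := by ring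
              rw [h0]
              exact abs_add_le _ _
          _ ≤ C * (γ ^ w.length * dist a b)
              + C * (∑ i ∈ Finset.range w.length, γ ^ i) * dist a b :=
              add_le_add h1 (ih a b)
          _ = C * (∑ i ∈ Finset.range (j :: w).length, γ ^ i) * dist a b := by
              simp [Finset.sum_range_succ]; ring
    intro ω a b
    refine (main ω a b).trans ?_
    have h2 : C * (∑ i ∈ Finset.range ω.length, γ ^ i) ≤ K := by
      rw [hKdef, div_eq_mul_one_div]
      exact mul_le_mul_of_nonneg_left (hgs _) hC.le
    exact mul_le_mul_of_nonneg_right h2 dist_nonneg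
  intro x y z
  refine le_iInf₂ fun ε hε => ?_
  have key : ∀ η : ℝ, 0 < η →
      manePot φ q x y + manePot φ q y z ≤ Seps φ q ε x z + (η : EReal) := by
    intro η hη
    set δ : ℝ := min (ε / 2) (η / K) with hδdef
    have hδ : 0 < δ := lt_min (by linarith) (div_pos hη hK)
    have step1 : manePot φ q x y + manePot φ q y z
        ≤ Seps φ q (ε / 2) x y + Seps φ q δ y z :=
      add_le_add (iInf₂_le _ (by linarith)) (iInf₂_le _ hδ)
    refine step1.trans ?_
    apply EReal.add_le_of_forall_lt
    intro a' ha' b' hb'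
    rw [Seps, lt_iSup_iff] at ha' hb'
    obtain ⟨ω, hω⟩ := ha'
    rw [lt_iSup_iff] at hω
    obtain ⟨⟨hωne, hωd⟩, hωlt⟩ := hω
    obtain ⟨τ, hτ⟩ := hb'
    rw [lt_iSup_iff] at hτ
    obtain ⟨⟨hτne, hτd⟩, hτlt⟩ := hτ
    -- the concatenated word
    set σ := ω ++ τ with hσdef
    have hσne : σ ≠ [] := by simp [hσdef, hωne]
    have hdyz : dist y (applyWord φ τ z) < δ := hτd
    have hσd : dist x (applyWord φ σ z) < ε := by
      have h3 : dist (applyWord φ ω y) (applyWord φ ω (applyWord φ τ z))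
          ≤ dist y (applyWord φ τ z) := by
        refine (hcontr ω _ _).trans ?_
        have : γ ^ ω.length ≤ 1 := pow_le_one₀ hγ0.le hγ1.le
        nlinarith [dist_nonneg (x := y) (y := applyWord φ τ z)]
      have h4 := dist_triangle x (applyWord φ ω y) (applyWord φ σ z)
      rw [hσdef, applyWord_append] at h4 ⊢
      have hδε : δ ≤ ε / 2 := min_le_left _ _
      linarith
    have hσsum : sumWord φ q ω y + sumWord φ q τ z ≤ sumWord φ q σ z + η := by
      have h5 : sumWord φ q ω y - sumWord φ q ω (applyWord φ τ z) ≤ K * δ := by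
        have := hsum ω y (applyWord φ τ z)
        have h6 : K * dist y (applyWord φ τ z) ≤ K * δ :=
          mul_le_mul_of_nonneg_left hdyz.le hK.le
        calc sumWord φ q ω y - sumWord φ q ω (applyWord φ τ z)
            ≤ |sumWord φ q ω y - sumWord φ q ω (applyWord φ τ z)| := le_abs_self _
          _ ≤ K * dist y (applyWord φ τ z) := this
          _ ≤ K * δ := h6
      have h7 : K * δ ≤ η := by
        have := min_le_right (ε / 2) (η / K)
        calc K * δ ≤ K * (η / K) := mul_le_mul_of_nonneg_left this hK.le
          _ = η := by field_simp
      rw [hσdef, sumWord_append]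
      linarith
    have hle : ((sumWord φ q σ z : ℝ) : EReal) ≤ Seps φ q ε x z := by
      rw [Seps]
      exact le_iSup₂ (f := fun (ω' : List J)
        (_ : ω' ≠ [] ∧ dist x (applyWord φ ω' z) < ε) =>
        ((sumWord φ q ω' z : ℝ) : EReal)) σ ⟨hσne, hσd⟩
    calc a' + b' ≤ ((sumWord φ q ω y : ℝ) : EReal) + ((sumWord φ q τ z : ℝ) : EReal) :=
          add_le_add hωlt.le hτlt.le
      _ = (((sumWord φ q ω y + sumWord φ q τ z : ℝ)) : EReal) := by
          rw [EReal.coe_add]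
      _ ≤ (((sumWord φ q σ z + η : ℝ)) : EReal) := by
          exact_mod_cast hσsum
      _ = ((sumWord φ q σ z : ℝ) : EReal) + (η : EReal) := by rw [EReal.coe_add]
      _ ≤ Seps φ q ε x z + (η : EReal) := add_le_add hle le_rfl
  -- conclude: a ≤ b since a ≤ b + η for all η > 0
  generalize hb : Seps φ q ε x z = b at key ⊢
  induction b using EReal.rec with
  | bot =>
    have := key 1 one_pos
    simpa using this
  | coe c =>
    rw [← EReal.le_of_forall_lt_iff_le]
    intro w hw
    have hcw : c < w := by exact_mod_cast hw
    calc manePot φ q x y + manePot φ q y z ≤ (c : EReal) + ((w - c : ℝ) : EReal) :=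
          key (w - c) (by linarith)
      _ = ((w : ℝ) : EReal) := by rw [← EReal.coe_add]; norm_num
  | top => exact le_top
end

section
/- For a max-plus IFS with constant (place-independent) weights, the density λ of any invariant idempotent probability satisfies, for every z ∈ Ω and every x ∈ X: λ(x) = S(x,z) = sup { Σ_{k≥1} q_{j_k} : (j₁,j₂,…) ∈ π^{-1}(x) }. In particular λ(z) = 0 for all z ∈ Ω, S(x,z) does not depend on the choice of z ∈ Ω, and the invariant idempotent probability is unique. -/
open Filter Topology

set_option linter.unusedSectionVars false
set_option linter.unusedVariables false

namespace MPAux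

lemma sumWord_const {J X : Type*} (φ : J → X → X) (q : J → ℝ) (w : List J) (x : X) :
    sumWord φ (fun j _ => q j) w x = (w.map q).sum := by
  induction w with
  | nil => rfl
  | cons j w ih => simp [sumWord, ih]

set_option linter.unusedSectionVars false

lemma applyWord_dist' {J X : Type*} [MetricSpace X] {γ : ℝ} (hγ0 : 0 ≤ γ)
    {φ : J → X → X}
    (hφ : ∀ j x₁ x₂, dist (φ j x₁) (φ j x₂) ≤ γ * dist x₁ x₂)
    (w : List J) (x y : X) :
    dist (applyWord φ w x) (applyWord φ w y) ≤ γ ^ w.length * dist x y := by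
  induction w with
  | nil => simp [applyWord]
  | cons j w ih =>
    have h1 := hφ j (applyWord φ w x) (applyWord φ w y)
    have h2 : γ * dist (applyWord φ w x) (applyWord φ w y) ≤ γ * (γ ^ w.length * dist x y) :=
      mul_le_mul_of_nonneg_left ih hγ0
    simp only [applyWord, List.length_cons, pow_succ]
    calc dist (φ j (applyWord φ w x)) (φ j (applyWord φ w y)) ≤ _ := h1
      _ ≤ γ * (γ ^ w.length * dist x y) := h2
      _ = γ ^ w.length * γ * dist x y := by ring

lemma applyWord_append {J X : Type*} (φ : J → X → X) (u v : List J) (x : X) :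
    applyWord φ (u ++ v) x = applyWord φ u (applyWord φ v x) := by
  induction u with
  | nil => rfl
  | cons j u ih => simp [applyWord, ih]

variable {J X : Type*} [MetricSpace J] [MetricSpace X]
  [CompactSpace J] [CompactSpace X] [Nonempty J] [Nonempty X]

-- the step lemma
lemma step_lemma {φ : J → X → X} {q : J → ℝ} {lam : X → EReal}
    (hle : ∀ x, lam x ≤ 0)
    (hinv : ∀ x, lam x =
      ⨆ (p : J × X) (_ : φ p.1 p.2 = x), ((q p.1 : EReal) + lam p.2))
    (y : X) (c : ℝ) (hc : (c : EReal) ≤ lam y) (ε : ℝ) (hε : 0 < ε) :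
    ∃ (j : J) (y' : X), φ j y' = y ∧ (((c - ε - q j : ℝ)) : EReal) ≤ lam y' := by
  have h1 : ((c - ε : ℝ) : EReal) < lam y :=
    lt_of_lt_of_le (EReal.coe_lt_coe_iff.2 (by linarith)) hc
  rw [hinv y] at h1
  rw [lt_iSup_iff] at h1
  obtain ⟨p, hp⟩ := h1
  rw [lt_iSup_iff] at hp
  obtain ⟨hpy, hlt⟩ := hp
  have hne_bot : lam p.2 ≠ ⊥ := by
    intro h
    rw [h, EReal.add_bot] at hlt
    exact (not_lt_bot hlt)
  have hne_top : lam p.2 ≠ ⊤ := by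
    intro h
    have := hle p.2
    rw [h] at this
    exact (lt_irrefl _ (lt_of_le_of_lt this (by norm_num : (0:EReal) < ⊤)))
  set t := (lam p.2).toReal with ht
  have htt : lam p.2 = (t : EReal) := (EReal.coe_toReal hne_top hne_bot).symm
  rw [htt, ← EReal.coe_add, EReal.coe_lt_coe_iff] at hlt
  exact ⟨p.1, p.2, hpy, by rw [htt]; exact EReal.coe_le_coe_iff.2 (by linarith)⟩

-- greedy sequences
lemma greedy {φ : J → X → X} {q : J → ℝ} {lam : X → EReal}
    (hle : ∀ x, lam x ≤ 0)
    (hinv : ∀ x, lam x =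
      ⨆ (p : J × X) (_ : φ p.1 p.2 = x), ((q p.1 : EReal) + lam p.2))
    (x : X) (r : ℝ) (hr : (r : EReal) ≤ lam x) (δ : ℝ) (hδ : 0 < δ) :
    ∃ (ω : ℕ → J) (y : ℕ → X),
      (∀ n, applyWord φ (List.ofFn fun i : Fin n => ω i) (y n) = x) ∧
      (∀ n, r - δ ≤ ∑ k ∈ Finset.range n, q (ω k)) := by
  have step : ∀ (n : ℕ) (p : {p : X × ℝ // (p.2 : EReal) ≤ lam p.1}),
      ∃ (jp : J × {p' : X × ℝ // (p'.2 : EReal) ≤ lam p'.1}),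
        φ jp.1 jp.2.1.1 = p.1.1 ∧ jp.2.1.2 = p.1.2 - δ * (1/2)^(n+1) - q jp.1 := by
    intro n p
    obtain ⟨j, y', hjy, hly⟩ := step_lemma hle hinv p.1.1 p.1.2 p.2
      (δ * (1/2)^(n+1)) (by positivity)
    exact ⟨⟨j, ⟨(y', p.1.2 - δ * (1/2)^(n+1) - q j), hly⟩⟩, hjy, rfl⟩
  choose f hf1 hf2 using step
  set st : ℕ → {p : X × ℝ // (p.2 : EReal) ≤ lam p.1} :=
    fun n => Nat.rec ⟨(x, r), hr⟩ (fun n s => (f n s).2) n with hst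
  set jj : ℕ → J := fun n => (f n (st n)).1 with hjj
  have hst_succ : ∀ n, st (n+1) = (f n (st n)).2 := fun n => rfl
  have hrel : ∀ n, φ (jj n) ((st (n+1)).1.1) = (st n).1.1 := by
    intro n; rw [hst_succ n]; exact hf1 n (st n)
  have hcrel : ∀ n, (st (n+1)).1.2 = (st n).1.2 - δ * (1/2)^(n+1) - q (jj n) := by
    intro n; rw [hst_succ n]; exact hf2 n (st n)
  have hgood : ∀ n, ((st n).1.2 : EReal) ≤ lam ((st n).1.1) := fun n => (st n).2
  have hy0 : (st 0).1.1 = x := rfl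
  have hc0 : (st 0).1.2 = r := rfl
  refine ⟨jj, fun n => (st n).1.1, ?_, ?_⟩
  · intro n
    induction n with
    | zero => exact hy0
    | succ n ih =>
      rw [List.ofFn_succ']
      have hcast : (List.ofFn fun i : Fin n => jj (Fin.castSucc i)) =
          (List.ofFn fun i : Fin n => jj i) := by
        congr 1
      rw [List.concat_eq_append, applyWord_append]
      have : applyWord φ [jj (Fin.last n)] ((st (n+1)).1.1) = (st n).1.1 := by
        show φ (jj n) ((st (n+1)).1.1) = (st n).1.1
        exact hrel n
      rw [this]
      simpa [Fin.coe_castSucc] using ih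
  · intro n
    have hsum : ∀ m, (st m).1.2 + (∑ k ∈ Finset.range m, q (jj k))
        + δ * (1 - (1/2)^m) = r := by
      intro m
      induction m with
      | zero => simp [hc0]
      | succ m ih =>
        rw [hcrel m, Finset.sum_range_succ]
        rw [pow_succ] at *
        linarith
    have hcle : (st n).1.2 ≤ 0 := by
      have h1 := le_trans (hgood n) (hle _)
      have : ((st n).1.2 : EReal) ≤ ((0:ℝ) : EReal) := by simpa using h1
      exact EReal.coe_le_coe_iff.1 this
    have h2 := hsum n
    have h3 : (0:ℝ) ≤ (1/2:ℝ)^n := by positivity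
    have h4 : (1/2:ℝ)^n ≤ 1 := pow_le_one₀ (by norm_num) (by norm_num)
    nlinarith


lemma dist_le_diam {Y : Type*} [MetricSpace Y] [CompactSpace Y] (a b : Y) :
    dist a b ≤ Metric.diam (Set.univ : Set Y) :=
  Metric.dist_le_diam_of_mem isCompact_univ.isBounded trivial trivial

lemma pi_of_applyWord {γ : ℝ} (hγ0 : 0 < γ) (hγ1 : γ < 1)
    {φ : J → X → X}
    (hφ : ∀ j x₁ x₂, dist (φ j x₁) (φ j x₂) ≤ γ * dist x₁ x₂)
    {π : (ℕ → J) → X}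
    (hπ : ∀ (ω : ℕ → J) (x : X),
      Filter.Tendsto (fun n => applyWord φ (List.ofFn fun i : Fin n => ω i) x)
        Filter.atTop (nhds (π ω)))
    (ω : ℕ → J) (y : ℕ → X) (x : X)
    (h : ∀ n, applyWord φ (List.ofFn fun i : Fin n => ω i) (y n) = x) :
    π ω = x := by
  set D := Metric.diam (Set.univ : Set X) with hD
  have hd : ∀ n, dist (applyWord φ (List.ofFn fun i : Fin n => ω i) x) x ≤ γ ^ n * D := by
    intro n
    calc dist (applyWord φ (List.ofFn fun i : Fin n => ω i) x) x
        = dist (applyWord φ (List.ofFn fun i : Fin n => ω i) x)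
            (applyWord φ (List.ofFn fun i : Fin n => ω i) (y n)) := by rw [h n]
      _ ≤ γ ^ (List.ofFn fun i : Fin n => ω i).length * dist x (y n) :=
          applyWord_dist' hγ0.le hφ _ _ _
      _ ≤ γ ^ n * D := by
          rw [List.length_ofFn]
          exact mul_le_mul_of_nonneg_left (dist_le_diam x (y n)) (by positivity)
  have hto : Tendsto (fun n => applyWord φ (List.ofFn fun i : Fin n => ω i) x)
      atTop (nhds x) := by
    rw [tendsto_iff_dist_tendsto_zero]
    apply squeeze_zero (fun n => dist_nonneg) hd
    have := (tendsto_pow_atTop_nhds_zero_of_lt_one hγ0.le hγ1).mul_const D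
    simpa using this
  exact tendsto_nhds_unique (hπ ω x) hto

lemma pi_shift {γ : ℝ} (hγ0 : 0 < γ) (hγ1 : γ < 1)
    {φ : J → X → X}
    (hφ : ∀ j x₁ x₂, dist (φ j x₁) (φ j x₂) ≤ γ * dist x₁ x₂)
    {π : (ℕ → J) → X}
    (hπ : ∀ (ω : ℕ → J) (x : X),
      Filter.Tendsto (fun n => applyWord φ (List.ofFn fun i : Fin n => ω i) x)
        Filter.atTop (nhds (π ω)))
    (ω : ℕ → J) (n : ℕ) :
    π ω = applyWord φ (List.ofFn fun i : Fin n => ω i) (π (fun k => ω (n + k))) := by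
  set x₀ : X := Classical.arbitrary X
  set w := (List.ofFn fun i : Fin n => ω i) with hw
  set ω' : ℕ → J := fun k => ω (n + k) with hω'
  have hsplit : ∀ m, (List.ofFn fun i : Fin (n + m) => ω i) =
      w ++ (List.ofFn fun i : Fin m => ω' i) := by
    intro m
    rw [List.ofFn_add]
    congr 1
  have ht : Tendsto (fun m : ℕ => n + m) atTop atTop := by
    simpa [Nat.add_comm] using tendsto_add_atTop_nat n
  have h1 : Tendsto (fun m => applyWord φ (List.ofFn fun i : Fin (n+m) => ω i) x₀)
      atTop (nhds (π ω)) := (hπ ω x₀).comp ht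
  have hc : Continuous (fun t : X => applyWord φ w t) := by
    clear hsplit h1 ht
    induction w with
    | nil => exact continuous_id
    | cons j u ih =>
      have hj : Continuous (φ j) :=
        (LipschitzWith.of_dist_le_mul (K := ⟨γ, hγ0.le⟩) (fun a b => hφ j a b)).continuous
      exact hj.comp ih
  have h2 : Tendsto (fun m => applyWord φ w
      (applyWord φ (List.ofFn fun i : Fin m => ω' i) x₀))
      atTop (nhds (applyWord φ w (π ω'))) :=
    (hc.continuousAt.tendsto).comp (hπ ω' x₀)
  have hfun : (fun m => applyWord φ (List.ofFn fun i : Fin (n+m) => ω i) x₀) =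
      (fun m => applyWord φ w (applyWord φ (List.ofFn fun i : Fin m => ω' i) x₀)) :=
    funext fun m => by rw [hsplit m, applyWord_append]
  rw [hfun] at h1
  exact tendsto_nhds_unique h1 h2


lemma ereal_le_coe_of_forall {A : EReal} {a : ℝ}
    (h : ∀ δ : ℝ, 0 < δ → A ≤ ((a + δ : ℝ) : EReal)) : A ≤ (a : EReal) := by
  induction A using EReal.rec with
  | bot => exact bot_le
  | top => exact absurd (h 1 one_pos) (fun hh => (EReal.coe_lt_top (a+1)).not_ge hh)
  | coe t =>
    rw [EReal.coe_le_coe_iff]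
    refine le_of_forall_pos_le_add fun δ hδ => ?_
    have := h δ hδ
    rw [EReal.coe_le_coe_iff] at this
    linarith

lemma ereal_coe_le_of_forall {A : EReal} {r : ℝ}
    (h : ∀ δ : ℝ, 0 < δ → ((r - δ : ℝ) : EReal) ≤ A) : (r : EReal) ≤ A := by
  induction A using EReal.rec with
  | top => exact le_top
  | bot => exact absurd (h 1 one_pos) (fun hh => (EReal.bot_lt_coe (r-1)).not_ge hh)
  | coe t =>
    rw [EReal.coe_le_coe_iff]
    have h2 : ∀ δ : ℝ, 0 < δ → r - δ ≤ t := fun δ hδ => EReal.coe_le_coe_iff.1 (h δ hδ)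
    by_contra hc
    push_neg at hc
    have := h2 ((r - t)/2) (by linarith)
    linarith

lemma ereal_nonneg_of_forall {a : EReal}
    (h : ∀ η : ℝ, 0 < η → ((-η : ℝ) : EReal) < a) : (0 : EReal) ≤ a := by
  have h2 : ((0:ℝ) : EReal) ≤ a := ereal_coe_le_of_forall (fun δ hδ => by
    simpa using (h δ hδ).le)
  simpa using h2

lemma sum_ofFn {J : Type*} (q : J → ℝ) (ω : ℕ → J) (n : ℕ) :
    ((List.ofFn fun i : Fin n => ω i).map q).sum = ∑ k ∈ Finset.range n, q (ω k) := by
  rw [List.map_ofFn, List.sum_ofFn]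
  exact Fin.sum_univ_eq_sum_range (fun k => q (ω k)) n

lemma lam_applyWord_ge {φ : J → X → X} {q : J → ℝ} {lam : X → EReal}
    (hinv : ∀ x, lam x =
      ⨆ (p : J × X) (_ : φ p.1 p.2 = x), ((q p.1 : EReal) + lam p.2))
    (w : List J) (y : X) :
    (((w.map q).sum : ℝ) : EReal) + lam y ≤ lam (applyWord φ w y) := by
  induction w with
  | nil => simp [applyWord]
  | cons j w ih =>
    have h1 : ((q j : ℝ) : EReal) + lam (applyWord φ w y) ≤ lam (φ j (applyWord φ w y)) := by
      rw [hinv (φ j (applyWord φ w y))]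
      exact le_iSup₂_of_le (j, applyWord φ w y) rfl le_rfl
    calc (((j :: w).map q).sum : EReal) + lam y
        = (q j : EReal) + (((w.map q).sum : ℝ) : EReal) + lam y := by
          simp [EReal.coe_add]
      _ = (q j : EReal) + ((((w.map q).sum : ℝ) : EReal) + lam y) := by rw [add_assoc]
      _ ≤ (q j : EReal) + lam (applyWord φ w y) := add_le_add_right ih _
      _ ≤ lam (φ j (applyWord φ w y)) := h1
      _ = lam (applyWord φ (j :: w) y) := rfl

lemma lam_ne_top {lam : X → EReal} (hle : ∀ x, lam x ≤ 0) (x : X) : lam x ≠ ⊤ := by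
  intro h
  have := hle x
  rw [h] at this
  exact (lt_irrefl _ (lt_of_le_of_lt this (by norm_num : (0:EReal) < ⊤)))

lemma lam_le_coding {γ : ℝ} (hγ0 : 0 < γ) (hγ1 : γ < 1)
    {φ : J → X → X}
    (hφ : ∀ j x₁ x₂, dist (φ j x₁) (φ j x₂) ≤ γ * dist x₁ x₂)
    {q : J → ℝ} {π : (ℕ → J) → X}
    (hπ : ∀ (ω : ℕ → J) (x : X),
      Filter.Tendsto (fun n => applyWord φ (List.ofFn fun i : Fin n => ω i) x)
        Filter.atTop (nhds (π ω)))
    {lam : X → EReal} (hle : ∀ x, lam x ≤ 0)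
    (hinv : ∀ x, lam x =
      ⨆ (p : J × X) (_ : φ p.1 p.2 = x), ((q p.1 : EReal) + lam p.2))
    (x : X) :
    lam x ≤ ⨆ (ω : ℕ → J) (_ : π ω = x),
      ⨅ n : ℕ, ((∑ k ∈ Finset.range n, q (ω k) : ℝ) : EReal) := by
  by_cases hbot : lam x = ⊥
  · rw [hbot]; exact bot_le
  set r := (lam x).toReal with hr
  have hrx : lam x = (r : EReal) := (EReal.coe_toReal (lam_ne_top hle x) hbot).symm
  rw [hrx]
  apply ereal_coe_le_of_forall
  intro δ hδ
  obtain ⟨ω, y, h1, h2⟩ := greedy hle hinv x r hrx.ge δ hδ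
  have hπx : π ω = x := pi_of_applyWord hγ0 hγ1 hφ hπ ω y x h1
  refine le_iSup₂_of_le ω hπx (le_iInf fun n => ?_)
  exact EReal.coe_le_coe_iff.2 (h2 n)

lemma coding_le_lam {φ : J → X → X}
    {q : J → ℝ} {π : (ℕ → J) → X}
    (hπ : ∀ (ω : ℕ → J) (x : X),
      Filter.Tendsto (fun n => applyWord φ (List.ofFn fun i : Fin n => ω i) x)
        Filter.atTop (nhds (π ω)))
    {lam : X → EReal} (husc : UpperSemicontinuous lam)
    (hsup : (⨆ x : X, lam x) = 0)
    (hinv : ∀ x, lam x =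
      ⨆ (p : J × X) (_ : φ p.1 p.2 = x), ((q p.1 : EReal) + lam p.2))
    (ω : ℕ → J) :
    (⨅ n : ℕ, ((∑ k ∈ Finset.range n, q (ω k) : ℝ) : EReal)) ≤ lam (π ω) := by
  refine le_of_forall_gt_imp_ge_of_dense fun a ha => ?_
  induction a using EReal.rec with
  | bot => exact absurd ha (by simp)
  | top => exact le_top
  | coe α =>
    apply ereal_le_coe_of_forall
    intro δ hδ
    have h0 : ((-δ : ℝ) : EReal) < ⨆ x, lam x := by
      rw [hsup]
      exact_mod_cast (by linarith : (-δ:ℝ) < 0)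
    obtain ⟨y, hy⟩ := lt_iSup_iff.1 h0
    have hchain : ∀ n : ℕ, (((∑ k ∈ Finset.range n, q (ω k)) - δ : ℝ) : EReal) ≤
        lam (applyWord φ (List.ofFn fun i : Fin n => ω i) y) := by
      intro n
      calc (((∑ k ∈ Finset.range n, q (ω k)) - δ : ℝ) : EReal)
          = ((∑ k ∈ Finset.range n, q (ω k) : ℝ) : EReal) + ((-δ : ℝ) : EReal) := by
            rw [sub_eq_add_neg, EReal.coe_add, EReal.coe_neg]
        _ ≤ ((∑ k ∈ Finset.range n, q (ω k) : ℝ) : EReal) + lam y :=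
            add_le_add_right hy.le _
        _ = ((((List.ofFn fun i : Fin n => ω i).map q).sum : ℝ) : EReal) + lam y := by
            rw [sum_ofFn]
        _ ≤ _ := lam_applyWord_ge hinv _ y
    have hev : ∀ᶠ n in atTop,
        lam (applyWord φ (List.ofFn fun i : Fin n => ω i) y) < ((α : ℝ) : EReal) :=
      (hπ ω y).eventually (husc (π ω) _ ha)
    obtain ⟨n, hn⟩ := hev.exists
    have h3 : (((∑ k ∈ Finset.range n, q (ω k)) - δ : ℝ) : EReal) < ((α : ℝ) : EReal) :=
      lt_of_le_of_lt (hchain n) hn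
    rw [EReal.coe_lt_coe_iff] at h3
    calc (⨅ n : ℕ, ((∑ k ∈ Finset.range n, q (ω k) : ℝ) : EReal))
        ≤ ((∑ k ∈ Finset.range n, q (ω k) : ℝ) : EReal) := iInf_le _ n
      _ ≤ ((α + δ : ℝ) : EReal) := EReal.coe_le_coe_iff.2 (by linarith)

theorem lam_eq_coding {γ : ℝ} (hγ0 : 0 < γ) (hγ1 : γ < 1)
    {φ : J → X → X}
    (hφ : ∀ j x₁ x₂, dist (φ j x₁) (φ j x₂) ≤ γ * dist x₁ x₂)
    {q : J → ℝ} {π : (ℕ → J) → X}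
    (hπ : ∀ (ω : ℕ → J) (x : X),
      Filter.Tendsto (fun n => applyWord φ (List.ofFn fun i : Fin n => ω i) x)
        Filter.atTop (nhds (π ω)))
    {lam : X → EReal} (husc : UpperSemicontinuous lam) (hle : ∀ x, lam x ≤ 0)
    (hsup : (⨆ x : X, lam x) = 0)
    (hinv : ∀ x, lam x =
      ⨆ (p : J × X) (_ : φ p.1 p.2 = x), ((q p.1 : EReal) + lam p.2))
    (x : X) :
    lam x = ⨆ (ω : ℕ → J) (_ : π ω = x),
      ⨅ n : ℕ, ((∑ k ∈ Finset.range n, q (ω k) : ℝ) : EReal) := by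
  refine le_antisymm (lam_le_coding hγ0 hγ1 hφ hπ hle hinv x) (iSup₂_le fun ω hω => ?_)
  rw [← hω]
  exact coding_le_lam hπ husc hsup hinv ω


lemma coding_le_manePot {γ : ℝ} (hγ0 : 0 < γ) (hγ1 : γ < 1)
    {φ : J → X → X}
    (hφ : ∀ j x₁ x₂, dist (φ j x₁) (φ j x₂) ≤ γ * dist x₁ x₂)
    {q : J → ℝ} {π : (ℕ → J) → X}
    (hπ : ∀ (ω : ℕ → J) (x : X),
      Filter.Tendsto (fun n => applyWord φ (List.ofFn fun i : Fin n => ω i) x)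
        Filter.atTop (nhds (π ω)))
    (ω : ℕ → J) (x z : X) (hω : π ω = x) :
    (⨅ n : ℕ, ((∑ k ∈ Finset.range n, q (ω k) : ℝ) : EReal)) ≤
      manePot φ (fun j _ => q j) x z := by
  refine le_iInf₂ fun ε hε => ?_
  set D := Metric.diam (Set.univ : Set X) with hDdef
  have hD : 0 ≤ D := Metric.diam_nonneg
  have hev : ∀ᶠ n : ℕ in atTop, γ ^ n * D < ε := by
    have h1 : Tendsto (fun n : ℕ => γ ^ n * D) atTop (nhds 0) := by
      have := (tendsto_pow_atTop_nhds_zero_of_lt_one hγ0.le hγ1).mul_const D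
      simpa using this
    exact h1.eventually_lt_const hε
  obtain ⟨n, hn2, hn1⟩ := (hev.and (eventually_ge_atTop 1)).exists
  set w : List J := List.ofFn fun i : Fin n => ω i with hwdef
  have hwne : w ≠ [] := by
    rw [hwdef, ← List.length_pos_iff]
    rw [List.length_ofFn]
    omega
  have hdist : dist x (applyWord φ w z) < ε := by
    rw [← hω, pi_shift hγ0 hγ1 hφ hπ ω n]
    calc dist (applyWord φ w (π fun k => ω (n + k))) (applyWord φ w z)
        ≤ γ ^ w.length * dist (π fun k => ω (n + k)) z := applyWord_dist' hγ0.le hφ _ _ _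
      _ ≤ γ ^ n * D := by
          rw [hwdef, List.length_ofFn]
          exact mul_le_mul_of_nonneg_left (dist_le_diam _ _) (by positivity)
      _ < ε := hn2
  refine le_trans (iInf_le _ n) ?_
  have hsw : sumWord φ (fun j _ => q j) w z = ∑ k ∈ Finset.range n, q (ω k) := by
    rw [sumWord_const, hwdef, sum_ofFn]
  exact le_iSup₂_of_le w ⟨hwne, hdist⟩ (le_of_eq (by rw [hsw]))

lemma manePot_le_lam {φ : J → X → X} {q : J → ℝ}
    {lam : X → EReal} (husc : UpperSemicontinuous lam)
    (hinv : ∀ x, lam x =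
      ⨆ (p : J × X) (_ : φ p.1 p.2 = x), ((q p.1 : EReal) + lam p.2))
    (z : X) (hz : lam z = 0) (x : X) :
    manePot φ (fun j _ => q j) x z ≤ lam x := by
  refine le_of_forall_gt_imp_ge_of_dense fun a ha => ?_
  have h1 := husc x a ha
  rw [Metric.eventually_nhds_iff] at h1
  obtain ⟨ε, hε, hball⟩ := h1
  refine le_trans (iInf₂_le ε hε) (iSup₂_le fun w hw => ?_)
  have h2 : ((sumWord φ (fun j _ => q j) w z : ℝ) : EReal) ≤ lam (applyWord φ w z) := by
    have h3 := lam_applyWord_ge hinv w z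
    rw [hz, add_zero] at h3
    rw [sumWord_const]
    exact h3
  exact le_of_lt (lt_of_le_of_lt h2 (hball (by rw [dist_comm]; exact hw.2)))

lemma lam_aubry {γ : ℝ} (hγ0 : 0 < γ) (hγ1 : γ < 1)
    {φ : J → X → X}
    (hφ : ∀ j x₁ x₂, dist (φ j x₁) (φ j x₂) ≤ γ * dist x₁ x₂)
    {q : J → ℝ}
    {lam : X → EReal} (husc : UpperSemicontinuous lam) (hle : ∀ x, lam x ≤ 0)
    (hsup : (⨆ x : X, lam x) = 0)
    (hinv : ∀ x, lam x =
      ⨆ (p : J × X) (_ : φ p.1 p.2 = x), ((q p.1 : EReal) + lam p.2))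
    (z : X) (hz : manePot φ (fun j _ => q j) z z = 0) : lam z = 0 := by
  refine le_antisymm (hle z) ?_
  refine le_of_forall_gt_imp_ge_of_dense fun a ha => ?_
  have h1 := husc z a ha
  rw [Metric.eventually_nhds_iff] at h1
  obtain ⟨ε, hε, hball⟩ := h1
  apply ereal_nonneg_of_forall
  intro η hη
  set D := Metric.diam (Set.univ : Set X) with hDdef
  have hD : 0 ≤ D := Metric.diam_nonneg
  -- choose m with γ^m * D < ε/2
  have hev : ∀ᶠ n : ℕ in atTop, γ ^ n * D < ε/2 := by
    have h2 : Tendsto (fun n : ℕ => γ ^ n * D) atTop (nhds 0) := by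
      have := (tendsto_pow_atTop_nhds_zero_of_lt_one hγ0.le hγ1).mul_const D
      simpa using this
    exact h2.eventually_lt_const (by linarith)
  obtain ⟨m, hm⟩ := hev.exists
  -- witness y' with lam y' > -(η/2)
  have h0 : ((-(η/2) : ℝ) : EReal) < ⨆ x, lam x := by
    rw [hsup]
    exact_mod_cast (by linarith : (-(η/2):ℝ) < 0)
  obtain ⟨y', hy'⟩ := lt_iSup_iff.1 h0
  -- choose word w₀
  set ε' : ℝ := (ε/2) * (1 - γ) with hε'def
  have hε' : 0 < ε' := by
    have : 0 < 1 - γ := by linarith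
    positivity
  have hSeps : (0 : EReal) ≤ Seps φ (fun j _ => q j) ε' z z := by
    rw [← hz]
    exact iInf₂_le ε' hε'
  have hlt : ((-(η/2)/(m+1) : ℝ) : EReal) < Seps φ (fun j _ => q j) ε' z z := by
    refine lt_of_lt_of_le ?_ hSeps
    have hpos : (0:ℝ) < (m:ℝ)+1 := by positivity
    have : (-(η/2)/(m+1) : ℝ) < 0 := by
      apply div_neg_of_neg_of_pos <;> linarith
    exact_mod_cast this
  rw [Seps, lt_iSup_iff] at hlt
  obtain ⟨w₀, hw₀⟩ := hlt
  rw [lt_iSup_iff] at hw₀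
  obtain ⟨⟨hw₀ne, hw₀d⟩, hw₀s⟩ := hw₀
  rw [EReal.coe_lt_coe_iff, sumWord_const] at hw₀s
  set s₀ : ℝ := (w₀.map q).sum with hs₀def
  have hw₀len : 1 ≤ w₀.length := List.length_pos_iff.2 hw₀ne
  -- repeated word
  set rep : ℕ → List J := fun i => Nat.rec [] (fun _ l => w₀ ++ l) i with hrepdef
  have hrep_succ : ∀ i, rep (i+1) = w₀ ++ rep i := fun i => rfl
  have hrep_sum : ∀ i, ((rep i).map q).sum = i * s₀ := by
    intro i
    induction i with
    | zero => simp [hrepdef]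
    | succ i ih =>
      rw [hrep_succ i, List.map_append, List.sum_append, ih]
      push_cast
      ring
  have hrep_len : ∀ i, i ≤ (rep i).length := by
    intro i
    induction i with
    | zero => simp
    | succ i ih =>
      rw [hrep_succ i, List.length_append]
      omega
  have hrep_dist : ∀ i, dist z (applyWord φ (rep i) z) ≤ ε/2 := by
    intro i
    induction i with
    | zero => simp [hrepdef, applyWord]; linarith
    | succ i ih =>
      rw [hrep_succ i]
      have hγw : γ ^ w₀.length ≤ γ := by
        have := pow_le_pow_of_le_one hγ0.le hγ1.le hw₀len
        simpa using this
      calc dist z (applyWord φ (w₀ ++ rep i) z)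
          ≤ dist z (applyWord φ w₀ z) +
            dist (applyWord φ w₀ z) (applyWord φ (w₀ ++ rep i) z) := dist_triangle _ _ _
        _ ≤ ε' + γ ^ w₀.length * dist z (applyWord φ (rep i) z) := by
            rw [applyWord_append]
            exact add_le_add hw₀d.le (applyWord_dist' hγ0.le hφ _ _ _)
        _ ≤ ε' + γ * (ε/2) := by
            refine add_le_add_right ?_ _
            calc γ ^ w₀.length * dist z (applyWord φ (rep i) z)
                ≤ γ * dist z (applyWord φ (rep i) z) :=
                  mul_le_mul_of_nonneg_right hγw dist_nonneg
              _ ≤ γ * (ε/2) := mul_le_mul_of_nonneg_left ih hγ0.le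
        _ = ε/2 := by rw [hε'def]; ring
  -- the point p
  set W : List J := rep (m+1) with hWdef
  set p : X := applyWord φ W y' with hpdef
  have hplam : ((-η : ℝ) : EReal) ≤ lam p := by
    have h3 := lam_applyWord_ge hinv W y'
    have h4 : (-(η/2) : ℝ) ≤ (W.map q).sum := by
      have h6 := hrep_sum (m+1)
      rw [hWdef, h6]
      have hpos : (0:ℝ) < (m:ℝ)+1 := by positivity
      have h5 : -(η/2) < ((m:ℝ)+1) * s₀ := by
        have := (div_lt_iff₀ hpos).1 hw₀s
        push_cast
        linarith
      push_cast
      linarith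
    calc ((-η : ℝ) : EReal) = ((-(η/2) : ℝ) : EReal) + ((-(η/2) : ℝ) : EReal) := by
          rw [← EReal.coe_add]; congr 1; ring
      _ ≤ (((W.map q).sum : ℝ) : EReal) + lam y' :=
          add_le_add (EReal.coe_le_coe_iff.2 h4) hy'.le
      _ ≤ lam p := h3
  have hpdist : dist p z < ε := by
    have hWlen : m ≤ W.length := le_trans (Nat.le_succ m) (hrep_len (m+1))
    have hγW : γ ^ W.length ≤ γ ^ m := pow_le_pow_of_le_one hγ0.le hγ1.le hWlen
    calc dist p z ≤ dist (applyWord φ W y') (applyWord φ W z) +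
          dist (applyWord φ W z) z := dist_triangle _ _ _
      _ ≤ γ ^ W.length * dist y' z + ε/2 := by
          refine add_le_add (applyWord_dist' hγ0.le hφ _ _ _) ?_
          rw [dist_comm]
          exact hrep_dist (m+1)
      _ ≤ γ ^ m * D + ε/2 := by
          refine add_le_add_left ?_ _
          exact mul_le_mul hγW (dist_le_diam _ _) dist_nonneg (by positivity)
      _ < ε := by linarith
  exact lt_of_le_of_lt hplam (hball hpdist)

end MPAux

/-- For a max-plus IFS with constant (place-independent) weights, the density λ of any
invariant idempotent probability satisfies λ(x) = S(x,z) for every z in the Aubry set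
(in particular λ(z) = 0 on the Aubry set and S(x,z) does not depend on z there),
λ(x) = sup over codings (j₁,j₂,…) of x of Σ_k q_{j_k}, and the invariant idempotent
probability is unique. -/
theorem invariant_density_constant_weights {J X : Type*} [MetricSpace J] [MetricSpace X]
    [CompactSpace J] [CompactSpace X] [Nonempty J] [Nonempty X]
    {γ : ℝ} (hγ0 : 0 < γ) (hγ1 : γ < 1)
    (φ : J → X → X)
    (hφ : ∀ j₁ j₂ x₁ x₂, dist (φ j₁ x₁) (φ j₂ x₂) ≤ γ * (dist j₁ j₂ + dist x₁ x₂))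
    (q : J → ℝ) (hqc : Continuous q) (hqn : (⨆ j : J, q j) = 0)
    (π : (ℕ → J) → X)
    (hπ : ∀ (ω : ℕ → J) (x : X),
      Filter.Tendsto (fun n => applyWord φ (List.ofFn fun i : Fin n => ω i) x)
        Filter.atTop (nhds (π ω)))
    (lam : X → EReal) (husc : UpperSemicontinuous lam) (hle : ∀ x, lam x ≤ 0)
    (hsup : (⨆ x : X, lam x) = 0)
    (hinv : ∀ x, lam x =
      ⨆ (p : J × X) (_ : φ p.1 p.2 = x), ((q p.1 : EReal) + lam p.2)) :
    (∀ z : X, manePot φ (fun j _ => q j) z z = 0 →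
        (lam z = 0 ∧ ∀ x, lam x = manePot φ (fun j _ => q j) x z)) ∧
    (∀ z₁ z₂ : X, manePot φ (fun j _ => q j) z₁ z₁ = 0 →
        manePot φ (fun j _ => q j) z₂ z₂ = 0 →
        ∀ x, manePot φ (fun j _ => q j) x z₁ = manePot φ (fun j _ => q j) x z₂) ∧
    (∀ x, lam x =
      ⨆ (ω : ℕ → J) (_ : π ω = x),
        ⨅ n : ℕ, ((∑ k ∈ Finset.range n, q (ω k) : ℝ) : EReal)) ∧
    (∀ lam' : X → EReal, UpperSemicontinuous lam' → (∀ x, lam' x ≤ 0) →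
      (⨆ x : X, lam' x) = 0 →
      (∀ x, lam' x =
        ⨆ (p : J × X) (_ : φ p.1 p.2 = x), ((q p.1 : EReal) + lam' p.2)) →
      lam = lam') := by
  have hφ' : ∀ j x₁ x₂, dist (φ j x₁) (φ j x₂) ≤ γ * dist x₁ x₂ := fun j a b => by
    have h := hφ j j a b
    simpa using h
  have part3 : ∀ x, lam x = ⨆ (ω : ℕ → J) (_ : π ω = x),
      ⨅ n : ℕ, ((∑ k ∈ Finset.range n, q (ω k) : ℝ) : EReal) :=
    fun x => MPAux.lam_eq_coding hγ0 hγ1 hφ' hπ husc hle hsup hinv x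
  have part1 : ∀ z : X, manePot φ (fun j _ => q j) z z = 0 →
      (lam z = 0 ∧ ∀ x, lam x = manePot φ (fun j _ => q j) x z) := by
    intro z hz
    have hlz : lam z = 0 := MPAux.lam_aubry hγ0 hγ1 hφ' husc hle hsup hinv z hz
    refine ⟨hlz, fun x => ?_⟩
    refine le_antisymm ?_ (MPAux.manePot_le_lam husc hinv z hlz x)
    rw [part3 x]
    exact iSup₂_le fun ω hω => MPAux.coding_le_manePot hγ0 hγ1 hφ' hπ ω x z hω
  refine ⟨part1, ?_, part3, ?_⟩
  · intro z₁ z₂ h1 h2 x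
    rw [← (part1 z₁ h1).2 x, ← (part1 z₂ h2).2 x]
  · intro lam' husc' hle' hsup' hinv'
    funext x
    rw [part3 x, MPAux.lam_eq_coding hγ0 hγ1 hφ' hπ husc' hle' hsup' hinv' x]
end

section
/- On the full shift X = {1,2}^ℕ with the IFS φ_j(x₁,x₂,…) = (j,x₁,x₂,…) for j ∈ {1,2}, and weights q_j(x) = 0 if j = x₁ and −1 otherwise, for each α ∈ [0,1) the function λ_α defined by: λ_α(x) = −∞ if x contains infinitely many 1's and infinitely many 2's; λ_α(x) = −n if x has exactly n changes of symbol and finitely many 2's; λ_α(x) = −n−α if x has exactly n changes of symbol and finitely many 1's, satisfies λ_α(x) = q_j(y) + λ_α(y) whenever φ_j(y) = x; hence λ_α is a fixed point of the transfer operator L(λ)(x) = max_{(j,y): φ_j(y)=x} (q_j(y)+λ(y)), yielding infinitely many distinct invariant densities. -/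
/- The full shift on two symbols: we encode the symbol "1" as `(0 : Fin 2)` and the
symbol "2" as `(1 : Fin 2)`. -/

/-- The IFS map φ_j prepending the symbol j: φ_j(x₁,x₂,…) = (j,x₁,x₂,…). -/
def shiftIn (j : Fin 2) (y : ℕ → Fin 2) : ℕ → Fin 2
  | 0 => j
  | n + 1 => y n

lemma changes_eq (j : Fin 2) (y : ℕ → Fin 2) :
    {i : ℕ | shiftIn j y i ≠ shiftIn j y (i + 1)} =
      (Nat.succ '' {i | y i ≠ y (i + 1)}) ∪ (if j = y 0 then (∅ : Set ℕ) else {0}) := by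
  ext i
  cases i with
  | zero =>
    simp only [shiftIn, Set.mem_setOf_eq, Set.mem_union, Set.mem_image]
    split_ifs with h <;> simp [h]
  | succ n =>
    simp only [shiftIn, Set.mem_setOf_eq, Set.mem_union, Set.mem_image]
    split_ifs with h <;> simp [Nat.succ_eq_add_one]

lemma ones_eq (j : Fin 2) (y : ℕ → Fin 2) :
    {i : ℕ | shiftIn j y i = 1} =
      (Nat.succ '' {i | y i = 1}) ∪ (if j = 1 then ({0} : Set ℕ) else ∅) := by
  ext i
  cases i with
  | zero =>
    simp only [shiftIn, Set.mem_setOf_eq, Set.mem_union, Set.mem_image]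
    split_ifs with h <;> simp [h]
  | succ n =>
    simp only [shiftIn, Set.mem_setOf_eq, Set.mem_union, Set.mem_image]
    split_ifs with h <;> simp [Nat.succ_eq_add_one]

lemma changes_fin_iff (j : Fin 2) (y : ℕ → Fin 2) :
    {i : ℕ | shiftIn j y i ≠ shiftIn j y (i + 1)}.Finite ↔ {i : ℕ | y i ≠ y (i + 1)}.Finite := by
  rw [changes_eq]
  constructor
  · intro h
    exact Set.Finite.of_finite_image (h.subset Set.subset_union_left)
      (Function.Injective.injOn Nat.succ_injective)
  · intro h
    refine (h.image _).union ?_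
    split_ifs <;> simp

lemma ones_fin_iff (j : Fin 2) (y : ℕ → Fin 2) :
    {i : ℕ | shiftIn j y i = 1}.Finite ↔ {i : ℕ | y i = 1}.Finite := by
  rw [ones_eq]
  constructor
  · intro h
    exact Set.Finite.of_finite_image (h.subset Set.subset_union_left)
      (Function.Injective.injOn Nat.succ_injective)
  · intro h
    refine (h.image _).union ?_
    split_ifs <;> simp

lemma changes_card (j : Fin 2) (y : ℕ → Fin 2) (hy : {i : ℕ | y i ≠ y (i + 1)}.Finite) :
    {i : ℕ | shiftIn j y i ≠ shiftIn j y (i + 1)}.ncard =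
      {i : ℕ | y i ≠ y (i + 1)}.ncard + (if j = y 0 then 0 else 1) := by
  rw [changes_eq]
  split_ifs with h
  · simp [Set.ncard_image_of_injective _ Nat.succ_injective]
  · rw [Set.ncard_union_eq (by simp) (hy.image _) (Set.finite_singleton 0),
      Set.ncard_image_of_injective _ Nat.succ_injective, Set.ncard_singleton]

/-- The place-dependent weight: q_j(x) = 0 if j = x₁ and −1 otherwise. -/
def weight (j : Fin 2) (y : ℕ → Fin 2) : ℝ := if j = y 0 then 0 else -1

open Classical in
/-- The density λ_α: equal to −∞ if x has infinitely many 1's and infinitely many 2's;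
equal to −n if x has exactly n changes of symbol and finitely many 2's;
equal to −n−α if x has exactly n changes of symbol and finitely many 1's. -/
noncomputable def lamAlpha (α : ℝ) (x : ℕ → Fin 2) : EReal :=
  if h : {i : ℕ | x i ≠ x (i + 1)}.Finite then
    (if {i : ℕ | x i = 1}.Finite then ((-(h.toFinset.card : ℝ) : ℝ) : EReal)
     else ((-(h.toFinset.card : ℝ) - α : ℝ) : EReal))
  else ⊥

lemma lamAlpha_shift (α : ℝ) (j : Fin 2) (y : ℕ → Fin 2) :
    lamAlpha α (shiftIn j y) = (weight j y : EReal) + lamAlpha α y := by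
  unfold lamAlpha
  by_cases hy : {i : ℕ | y i ≠ y (i + 1)}.Finite
  · have hx : {i : ℕ | shiftIn j y i ≠ shiftIn j y (i + 1)}.Finite := (changes_fin_iff j y).2 hy
    rw [dif_pos hx, dif_pos hy]
    have hcard : (hx.toFinset.card : ℝ) =
        (hy.toFinset.card : ℝ) + (if j = y 0 then 0 else 1) := by
      rw [← Set.ncard_eq_toFinset_card _ hx, ← Set.ncard_eq_toFinset_card _ hy,
        changes_card j y hy]
      push_cast
      split_ifs <;> norm_num
    have hones : {i : ℕ | shiftIn j y i = 1}.Finite ↔ {i : ℕ | y i = 1}.Finite :=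
      ones_fin_iff j y
    unfold weight
    by_cases ho : {i : ℕ | y i = 1}.Finite
    · rw [if_pos (hones.2 ho), if_pos ho]
      rw [← EReal.coe_add]
      congr 1
      rw [hcard]
      split_ifs <;> ring
    · rw [if_neg (fun h => ho (hones.1 h)), if_neg ho]
      rw [← EReal.coe_add]
      congr 1
      rw [hcard]
      split_ifs <;> ring
  · have hx : ¬ {i : ℕ | shiftIn j y i ≠ shiftIn j y (i + 1)}.Finite :=
      fun h => hy ((changes_fin_iff j y).1 h)
    rw [dif_neg hx, dif_neg hy]
    exact (EReal.add_bot _).symm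

lemma shiftIn_head_tail (x : ℕ → Fin 2) :
    shiftIn (x 0) (fun n => x (n + 1)) = x := by
  funext n
  cases n <;> rfl

/-- For every α ∈ [0,1), λ_α satisfies λ_α(φ_j(y)) = q_j(y) + λ_α(y), hence is a fixed
point of the transfer operator L(λ)(x) = max_{(j,y) : φ_j(y)=x} (q_j(y)+λ(y)); moreover
distinct α give distinct densities, yielding infinitely many invariant densities. -/
theorem lamAlpha_invariant :
    (∀ α : ℝ, 0 ≤ α → α < 1 →
      (∀ (j : Fin 2) (y : ℕ → Fin 2),
        lamAlpha α (shiftIn j y) = (weight j y : EReal) + lamAlpha α y) ∧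
      (∀ x : ℕ → Fin 2, lamAlpha α x =
        ⨆ (p : Fin 2 × (ℕ → Fin 2)) (_ : shiftIn p.1 p.2 = x),
          ((weight p.1 p.2 : EReal) + lamAlpha α p.2))) ∧
    (∀ α β : ℝ, 0 ≤ α → α < 1 → 0 ≤ β → β < 1 →
      lamAlpha α = lamAlpha β → α = β) := by
  constructor
  · intro α _ _
    refine ⟨lamAlpha_shift α, fun x => ?_⟩
    apply le_antisymm
    · have h := lamAlpha_shift α (x 0) (fun n => x (n + 1))
      rw [shiftIn_head_tail] at h
      rw [h]
      exact le_iSup₂ (f := fun (p : Fin 2 × (ℕ → Fin 2)) (_ : shiftIn p.1 p.2 = x) =>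
        ((weight p.1 p.2 : EReal) + lamAlpha α p.2)) (x 0, fun n => x (n + 1))
        (shiftIn_head_tail x)
    · apply iSup₂_le
      intro p hp
      rw [← lamAlpha_shift α p.1 p.2, hp]
  · intro α β _ _ _ _ h
    have hx := congrFun h (fun _ => (1 : Fin 2))
    have hch : {i : ℕ | (fun _ => (1 : Fin 2)) i ≠ (fun _ => (1 : Fin 2)) (i + 1)}.Finite := by
      simp
    have hones : ¬ {i : ℕ | (fun _ => (1 : Fin 2)) i = 1}.Finite := by
      intro hf
      exact Set.infinite_univ (by simpa [Set.eq_univ_iff_forall] using hf : (Set.univ : Set ℕ).Finite)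
    unfold lamAlpha at hx
    rw [dif_pos hch, dif_pos hch, if_neg hones, if_neg hones] at hx
    have hc : (hch.toFinset.card : ℝ) = 0 := by
      norm_num [Finset.card_eq_zero, Set.Finite.toFinset_eq_empty]
    rw [hc] at hx
    have := EReal.coe_eq_coe_iff.1 hx
    linarith
end
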